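/- Local metric equivalence (upper part): if (Π, ω) and (Π', ω') are separable MABS parameters with min(ASB,WSB) ≥ δ and ‖ΠAω − Π'Aω'‖ ≤ δ√M/(1 + m·a_k) (Frobenius norm), then d((Π,ω),(Π',ω')) ≤ ‖ΠAω − Π'Aω'‖, where d((Π,ω),(Π',ω')) = √M·1_{Π≠Π'} + max_i ‖ω_{i·} − ω'_{i·}‖. -/

import Mathlib

open Finset Real

namespace MABS

/-- Euclidean norm of a vector in `ℝ^M`. -/
noncomputable def vnorm {M : ℕ} (v : Fin M → ℝ) : ℝ := Real.sqrt (∑ j, (v j) ^ 2)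

/-- Euclidean norm of the `i`-th row of the mixing matrix `ω`. -/
noncomputable def rowNorm {m M : ℕ} (ω : Fin m → Fin M → ℝ) (i : Fin m) : ℝ := vnorm (ω i)

/-- `e` has all its entries in the alphabet `𝔄`. -/
def inAlph (𝔄 : Finset ℝ) {m : ℕ} (e : Fin m → ℝ) : Prop := ∀ i, e i ∈ 𝔄

/-- The mixture `e ω ∈ ℝ^M` of the rows of `ω` with coefficients `e`. -/
noncomputable def mix {m M : ℕ} (e : Fin m → ℝ) (ω : Fin m → Fin M → ℝ) : Fin M → ℝ :=
  fun j => ∑ i, e i * ω i j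

/-- Alphabet separation boundary `ASB(ω) = min_{e ≠ e' ∈ 𝔄^m} ‖eω - e'ω‖ / √M`. -/
noncomputable def ASB (𝔄 : Finset ℝ) {m M : ℕ} (ω : Fin m → Fin M → ℝ) : ℝ :=
  sInf {x : ℝ | ∃ e e' : Fin m → ℝ, inAlph 𝔄 e ∧ inAlph 𝔄 e' ∧ e ≠ e' ∧
    x = vnorm (mix e ω - mix e' ω) / Real.sqrt (M : ℝ)}

/-- `WSB(ω) ≥ δ`, i.e. every consecutive row-norm gap is at least `2δ√M/(1+m·a_k)`. -/
def WSBge (ak δ : ℝ) {m M : ℕ} (ω : Fin m → Fin M → ℝ) : Prop :=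
  ∀ i j : Fin m, (j : ℕ) = (i : ℕ) + 1 →
    δ ≤ ((1 + (m : ℝ) * ak) / (2 * Real.sqrt (M : ℝ))) * (rowNorm ω j - rowNorm ω i)

/-- Weights separation boundary as a real number. -/
noncomputable def WSBval (ak : ℝ) {m M : ℕ} (ω : Fin m → Fin M → ℝ) : ℝ :=
  ((1 + (m : ℝ) * ak) / (2 * Real.sqrt (M : ℝ))) *
    sInf {x : ℝ | ∃ i j : Fin m, (j : ℕ) = (i : ℕ) + 1 ∧ x = rowNorm ω j - rowNorm ω i}

/-- `ω ∈ Ω_{m,M}`: nonnegative entries, columns summing to one, strictly increasing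
positive row norms. -/
def Omega {m M : ℕ} (ω : Fin m → Fin M → ℝ) : Prop :=
  (∀ i j, 0 ≤ ω i j) ∧ (∀ j, ∑ i, ω i j = 1) ∧
    (∀ i, 0 < rowNorm ω i) ∧ StrictMono (rowNorm ω)

/-- The alphabet `𝔄 = {0, 1, a₃, …, a_k}` with `1 < a₃ < … < a_k`: it contains `0` and `1`,
`ak` is its maximal element, and every nonzero element is at least `1`. -/
def AlphOK (𝔄 : Finset ℝ) (ak : ℝ) : Prop :=
  (0 : ℝ) ∈ 𝔄 ∧ (1 : ℝ) ∈ 𝔄 ∧ ak ∈ 𝔄 ∧ (∀ x ∈ 𝔄, x ≤ ak) ∧ (∀ x ∈ 𝔄, x = 0 ∨ 1 ≤ x)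

/-- `Δ𝔄_min`, the minimal distance between distinct alphabet values. -/
noncomputable def DeltaMin (𝔄 : Finset ℝ) : ℝ :=
  sInf {x : ℝ | ∃ a ∈ 𝔄, ∃ b ∈ 𝔄, a ≠ b ∧ x = |a - b|}

/-- The `i`-th standard unit (row) vector in `ℝ^m`. -/
def unitRow {m : ℕ} (i : Fin m) : Fin m → ℝ := fun i' => if i' = i then 1 else 0

/-- `F = ΠA` is a separable finite-alphabet design: every row lies in `𝔄^m` and every
standard unit vector occurs among the rows. -/
def Separable (𝔄 : Finset ℝ) {n m : ℕ} (F : Fin n → Fin m → ℝ) : Prop :=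
  (∀ j, inAlph 𝔄 (F j)) ∧ ∀ i : Fin m, ∃ j, F j = unitRow i

end MABS
namespace MABS

/-- The metric `d((F,ω),(F',ω')) = √M·1_{F ≠ F'} + max_i ‖ω_{i·} - ω'_{i·}‖`. -/
noncomputable def dmet {n m M : ℕ} (F F' : Fin n → Fin m → ℝ)
    (ω ω' : Fin m → Fin M → ℝ) : ℝ :=
  (if F = F' then 0 else Real.sqrt (M : ℝ)) +
    sSup (Set.range fun i : Fin m => vnorm (ω i - ω' i))

/-- The Frobenius distance `‖Fω - F'ω'‖` between the two `n × M` mixtures. -/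
noncomputable def frob {n m M : ℕ} (F F' : Fin n → Fin m → ℝ)
    (ω ω' : Fin m → Fin M → ℝ) : ℝ :=
  Real.sqrt (∑ j : Fin n, ∑ l : Fin M, (mix (F j) ω l - mix (F' j) ω' l) ^ 2)

end MABS

/-!
Write `ε = δ√M/(1 + m·a_k)`. A row of `F` equal to the unit row `e_i` represents `ω i` as an
alphabet mixture of the rows of `ω'` up to one row of `Fω - F'ω'`, and symmetrically with the
roles exchanged; these residual rows have square sum at most `ε²`. By induction along the row
order every such representation is the trivial one, `e_i` itself. Hence `‖ω i - ω' i‖` is a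
single residual row, at most `‖Fω - F'ω'‖`, and the remaining rows of `F` are then forced to
agree with those of `F'` by the separation of `ω`.
-/

namespace MABS

section Vnorm

variable {M : ℕ}

lemma vnorm_eq_norm (v : Fin M → ℝ) : vnorm v = ‖WithLp.toLp 2 v‖ := by
  simp [vnorm, EuclideanSpace.norm_eq]

lemma vnorm_sub_comm (v w : Fin M → ℝ) : vnorm (v - w) = vnorm (w - v) := by
  simp only [vnorm_eq_norm, WithLp.toLp_sub, norm_sub_rev]

lemma vnorm_add_le (v w : Fin M → ℝ) : vnorm (v + w) ≤ vnorm v + vnorm w := by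
  simpa only [vnorm_eq_norm, WithLp.toLp_add] using norm_add_le _ _

lemma vnorm_sub_le_add (u v w : Fin M → ℝ) : vnorm (u - w) ≤ vnorm (u - v) + vnorm (v - w) := by
  simpa only [vnorm_eq_norm, WithLp.toLp_sub] using norm_sub_le_norm_sub_add_norm_sub _ _ _

lemma vnorm_le_add_vnorm_sub (v w : Fin M → ℝ) : vnorm v ≤ vnorm w + vnorm (v - w) := by
  simpa only [vnorm_eq_norm, WithLp.toLp_sub] using norm_le_norm_add_norm_sub' _ _

lemma vnorm_sum_smul_le {ι : Type*} [Fintype ι] (c : ι → ℝ) (v : ι → Fin M → ℝ) :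
    vnorm (∑ i, c i • v i) ≤ ∑ i, |c i| * vnorm (v i) := by
  simp only [vnorm_eq_norm, WithLp.toLp_sum, WithLp.toLp_smul]
  refine (norm_sum_le _ _).trans_eq ?_
  simp [norm_smul]

lemma vnorm_le_vnorm_of_nonneg_of_le {v w : Fin M → ℝ} (h0 : 0 ≤ v) (hvw : v ≤ w) :
    vnorm v ≤ vnorm w := by
  unfold vnorm
  gcongr with l
  exacts [h0 l, hvw l]

lemma vnorm_sub_le_of_le {x y X Y : Fin M → ℝ} (hx : x ≤ X) (hy : y ≤ Y) :
    vnorm (X - x) ≤ vnorm (Y - x) + vnorm (X - y) := by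
  calc vnorm (X - x) ≤ vnorm ((Y - x) + (X - y)) := by
        refine vnorm_le_vnorm_of_nonneg_of_le (sub_nonneg.mpr hx) fun l => ?_
        simp only [Pi.sub_apply, Pi.add_apply]
        linarith [hy l]
    _ ≤ vnorm (Y - x) + vnorm (X - y) := vnorm_add_le _ _

end Vnorm

namespace AlphOK

variable {𝔄 : Finset ℝ} {ak : ℝ}

lemma nonneg (hA : AlphOK 𝔄 ak) {x : ℝ} (hx : x ∈ 𝔄) : 0 ≤ x := by
  rcases hA.2.2.2.2 x hx with rfl | h
  exacts [le_rfl, zero_le_one.trans h]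

lemma one_le_of_ne_zero (hA : AlphOK 𝔄 ak) {x : ℝ} (hx : x ∈ 𝔄) (hx0 : x ≠ 0) : 1 ≤ x :=
  (hA.2.2.2.2 x hx).resolve_left hx0

lemma one_le_ak (hA : AlphOK 𝔄 ak) : 1 ≤ ak :=
  hA.2.2.2.1 1 hA.2.1

lemma unitRow_inAlph (hA : AlphOK 𝔄 ak) {m : ℕ} (i : Fin m) : inAlph 𝔄 (unitRow i) := by
  intro u
  unfold unitRow
  split_ifs
  exacts [hA.2.1, hA.1]

lemma sqrt_one_add_sum_sq_lt (hA : AlphOK 𝔄 ak) {m : ℕ} (hm : 0 < m) {c : Fin m → ℝ}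
    (hc : inAlph 𝔄 c) : √(1 + ∑ u, c u ^ 2) < 1 + m * ak := by
  have hak := hA.one_le_ak
  have hsum : ∑ u, c u ^ 2 ≤ m * ak ^ 2 := by
    calc ∑ u, c u ^ 2 ≤ ∑ _u : Fin m, ak ^ 2 := by
          gcongr with u
          · exact hA.nonneg (hc u)
          · exact hA.2.2.2.1 _ (hc u)
      _ = m * ak ^ 2 := by simp
  have hm1 : (1 : ℝ) ≤ m := by exact_mod_cast hm
  rw [Real.sqrt_lt' (by positivity)]
  nlinarith [mul_le_mul_of_nonneg_right hm1 (by positivity : (0 : ℝ) ≤ m * ak ^ 2)]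

end AlphOK

section Mix

variable {m M : ℕ}

lemma unitRow_eq_single (i : Fin m) : unitRow i = Pi.single i 1 := by
  ext u
  simp [unitRow, Pi.single_apply]

lemma unitRow_injective : Function.Injective (unitRow : Fin m → Fin m → ℝ) := by
  intro i k h
  by_contra hne
  simpa [unitRow, hne] using congrFun h i

lemma mix_eq_sum (e : Fin m → ℝ) (ω : Fin m → Fin M → ℝ) : mix e ω = ∑ i, e i • ω i := by
  ext l
  simp [mix]

lemma mix_unitRow (i : Fin m) (ω : Fin m → Fin M → ℝ) : mix (unitRow i) ω = ω i := by
  simp [mix_eq_sum, unitRow_eq_single, Pi.single_apply]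

lemma vnorm_mix_sub_mix_le {c : Fin m → ℝ} (hc : ∀ u, 0 ≤ c u) (ω ω' : Fin m → Fin M → ℝ) :
    vnorm (mix c ω - mix c ω') ≤ ∑ u, c u * vnorm (ω u - ω' u) := by
  rw [mix_eq_sum, mix_eq_sum, ← Finset.sum_sub_distrib]
  simp only [← smul_sub]
  refine (vnorm_sum_smul_le _ _).trans_eq ?_
  simp [abs_of_nonneg (hc _)]

lemma le_mix_of_ne_zero {𝔄 : Finset ℝ} {ak : ℝ} (hA : AlphOK 𝔄 ak) {c : Fin m → ℝ}
    (hc : inAlph 𝔄 c) {ω : Fin m → Fin M → ℝ} (hω : ∀ i l, 0 ≤ ω i l) {u : Fin m}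
    (hu : c u ≠ 0) : ω u ≤ mix c ω := by
  intro l
  calc ω u l ≤ c u * ω u l := le_mul_of_one_le_left (hω u l) (hA.one_le_of_ne_zero (hc u) hu)
    _ ≤ mix c ω l :=
        Finset.single_le_sum (f := fun i => c i * ω i l)
          (fun i _ => mul_nonneg (hA.nonneg (hc i)) (hω i l)) (Finset.mem_univ u)

lemma rowNorm_le_vnorm_mix {𝔄 : Finset ℝ} {ak : ℝ} (hA : AlphOK 𝔄 ak) {c : Fin m → ℝ}
    (hc : inAlph 𝔄 c) {ω : Fin m → Fin M → ℝ} (hω : ∀ i l, 0 ≤ ω i l) {u : Fin m}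
    (hu : c u ≠ 0) : rowNorm ω u ≤ vnorm (mix c ω) :=
  vnorm_le_vnorm_of_nonneg_of_le (hω u) (le_mix_of_ne_zero hA hc hω hu)

end Mix

/-- `ASB(ω) ≥ κ/√M`. -/
def IsSeparated (𝔄 : Finset ℝ) (κ : ℝ) {m M : ℕ} (ω : Fin m → Fin M → ℝ) : Prop :=
  ∀ e e' : Fin m → ℝ, inAlph 𝔄 e → inAlph 𝔄 e' → e ≠ e' → κ ≤ vnorm (mix e ω - mix e' ω)

def RowNormGap (γ : ℝ) {m M : ℕ} (ω : Fin m → Fin M → ℝ) : Prop :=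
  ∀ i k : Fin m, i < k → rowNorm ω i + γ ≤ rowNorm ω k

lemma isSeparated_of_le_ASB {𝔄 : Finset ℝ} {δ : ℝ} {m M : ℕ} {ω : Fin m → Fin M → ℝ}
    (hM : 0 < M) (hasb : δ ≤ ASB 𝔄 ω) : IsSeparated 𝔄 (δ * √M) ω := by
  intro e e' he he' hne
  have hbdd : BddBelow {x : ℝ | ∃ e e' : Fin m → ℝ, inAlph 𝔄 e ∧ inAlph 𝔄 e' ∧ e ≠ e' ∧
      x = vnorm (mix e ω - mix e' ω) / √M} := by
    refine ⟨0, ?_⟩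
    rintro x ⟨a, b, -, -, -, rfl⟩
    exact div_nonneg (Real.sqrt_nonneg _) (Real.sqrt_nonneg _)
  have hle := hasb.trans (csInf_le hbdd ⟨e, e', he, he', hne, rfl⟩)
  rwa [le_div_iff₀ (Real.sqrt_pos.mpr (by exact_mod_cast hM))] at hle

lemma rowNormGap_of_WSBge {ak δ : ℝ} {m M : ℕ} {ω : Fin m → Fin M → ℝ} (hM : 0 < M)
    (hak : 0 ≤ ak) (hw : WSBge ak δ ω) (hmono : StrictMono (rowNorm ω)) :
    RowNormGap (2 * (δ * √M / (1 + m * ak))) ω := by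
  intro i k hik
  have hsucc : (i : ℕ) + 1 < m := lt_of_le_of_lt hik k.isLt
  have hgap := hw i ⟨i + 1, hsucc⟩ rfl
  have hnext : rowNorm ω ⟨i + 1, hsucc⟩ ≤ rowNorm ω k := hmono.monotone (Fin.mk_le_of_le_val hik)
  have hsM : 0 < √(M : ℝ) := Real.sqrt_pos.mpr (by exact_mod_cast hM)
  have hc : 0 < (1 + (m : ℝ) * ak) / (2 * √M) := by positivity
  have hε : 2 * (δ * √M / (1 + m * ak)) = δ / ((1 + m * ak) / (2 * √M)) := by
    field_simp
  have hstep : δ / ((1 + m * ak) / (2 * √M)) ≤ rowNorm ω ⟨i + 1, hsucc⟩ - rowNorm ω i := by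
    rw [div_le_iff₀ hc]
    linarith
  linarith

lemma RowNormGap.monotone {γ : ℝ} {m M : ℕ} {ω : Fin m → Fin M → ℝ} (h : RowNormGap γ ω)
    (hγ : 0 ≤ γ) : Monotone (rowNorm ω) := by
  intro i k hik
  rcases hik.eq_or_lt with rfl | hlt
  exacts [le_rfl, by linarith [h i k hlt]]

section Frob

variable {n m M : ℕ}

lemma sum_vnorm_sq_eq_frob_sq (F F' : Fin n → Fin m → ℝ) (ω ω' : Fin m → Fin M → ℝ) :
    ∑ r, vnorm (mix (F r) ω - mix (F' r) ω') ^ 2 = frob F F' ω ω' ^ 2 := by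
  rw [frob, Real.sq_sqrt (by positivity)]
  simp [vnorm, Real.sq_sqrt (Finset.sum_nonneg fun _ _ => sq_nonneg _)]

lemma vnorm_le_frob (F F' : Fin n → Fin m → ℝ) (ω ω' : Fin m → Fin M → ℝ) (r : Fin n) :
    vnorm (mix (F r) ω - mix (F' r) ω') ≤ frob F F' ω ω' := by
  have hle := Finset.single_le_sum (f := fun r => vnorm (mix (F r) ω - mix (F' r) ω') ^ 2)
    (fun _ _ => sq_nonneg _) (Finset.mem_univ r)
  rw [sum_vnorm_sq_eq_frob_sq] at hle
  exact (sq_le_sq₀ (Real.sqrt_nonneg _) (Real.sqrt_nonneg _)).1 hle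

end Frob

/-- With `ε = δ√M/(1 + m·a_k)`, the gap and separation fields are `WSB ≥ δ` and `ASB ≥ δ`;
`η` bounds the rows of `Fω - F'ω'`. -/
structure CloseSeparatedPairs (𝔄 : Finset ℝ) (ak ε : ℝ) {n m M : ℕ}
    (F F' : Fin n → Fin m → ℝ) (ω ω' : Fin m → Fin M → ℝ) (η : Fin n → ℝ) : Prop where
  alph : AlphOK 𝔄 ak
  inAlph_left : ∀ r, inAlph 𝔄 (F r)
  inAlph_right : ∀ r, inAlph 𝔄 (F' r)
  nonneg_left : ∀ i l, 0 ≤ ω i l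
  nonneg_right : ∀ i l, 0 ≤ ω' i l
  gap_left : RowNormGap (2 * ε) ω
  gap_right : RowNormGap (2 * ε) ω'
  sep_left : IsSeparated 𝔄 ((1 + m * ak) * ε) ω
  sep_right : IsSeparated 𝔄 ((1 + m * ak) * ε) ω'
  residual_le : ∀ r, vnorm (mix (F r) ω - mix (F' r) ω') ≤ η r
  sum_sq_le : ∑ r, η r ^ 2 ≤ ε ^ 2
  pos : 0 < ε

namespace CloseSeparatedPairs

variable {𝔄 : Finset ℝ} {ak ε : ℝ} {n m M : ℕ} {F F' : Fin n → Fin m → ℝ}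
  {ω ω' : Fin m → Fin M → ℝ} {η : Fin n → ℝ} {j j' : Fin m → Fin n}

lemma symm (h : CloseSeparatedPairs 𝔄 ak ε F F' ω ω' η) :
    CloseSeparatedPairs 𝔄 ak ε F' F ω' ω η where
  alph := h.alph
  inAlph_left := h.inAlph_right
  inAlph_right := h.inAlph_left
  nonneg_left := h.nonneg_right
  nonneg_right := h.nonneg_left
  gap_left := h.gap_right
  gap_right := h.gap_left
  sep_left := h.sep_right
  sep_right := h.sep_left
  residual_le r := (vnorm_sub_comm _ _).trans_le (h.residual_le r)
  sum_sq_le := h.sum_sq_le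
  pos := h.pos

lemma residual_le_of_right (h : CloseSeparatedPairs 𝔄 ak ε F F' ω ω' η) {r : Fin n} {s : Fin m}
    (hr : F' r = unitRow s) : vnorm (mix (F r) ω - ω' s) ≤ η r := by
  simpa [hr, mix_unitRow] using h.residual_le r

lemma sum_mul_le (h : CloseSeparatedPairs 𝔄 ak ε F F' ω ω' η) {ι : Type*} [Fintype ι]
    {g : ι → Fin n} (hg : Function.Injective g) (w : ι → ℝ) :
    ∑ i, w i * η (g i) ≤ √(∑ i, w i ^ 2) * ε := by
  classical
  have hsq : ∑ i, η (g i) ^ 2 ≤ ε ^ 2 := by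
    calc ∑ i, η (g i) ^ 2 = ∑ r ∈ Finset.univ.image g, η r ^ 2 :=
          (Finset.sum_image (f := fun r => η r ^ 2) fun a _ b _ hab => hg hab).symm
      _ ≤ ∑ r, η r ^ 2 :=
          Finset.sum_le_sum_of_subset_of_nonneg (Finset.subset_univ _) fun r _ _ => sq_nonneg _
      _ ≤ ε ^ 2 := h.sum_sq_le
  calc ∑ i, w i * η (g i) ≤ √(∑ i, w i ^ 2) * √(∑ i, η (g i) ^ 2) :=
        Real.sum_mul_le_sqrt_mul_sqrt _ _ _
    _ ≤ √(∑ i, w i ^ 2) * ε := by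
        gcongr
        simpa [Real.sqrt_sq h.pos.le] using Real.sqrt_le_sqrt hsq

lemma add_lt_two_mul (h : CloseSeparatedPairs 𝔄 ak ε F F' ω ω' η) {r₁ r₂ : Fin n}
    (hr : r₁ ≠ r₂) : η r₁ + η r₂ < 2 * ε := by
  have hinj : Function.Injective ![r₁, r₂] := by
    intro a b
    fin_cases a <;> fin_cases b <;> simp [hr, hr.symm]
  have hle := h.sum_mul_le hinj 1
  simp only [Pi.one_apply, one_mul, one_pow, Fin.sum_univ_two, Matrix.cons_val_zero,
    Matrix.cons_val_one] at hle
  have hsqrt : √(1 + 1 : ℝ) < 2 := by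
    rw [Real.sqrt_lt' two_pos]
    norm_num
  nlinarith [h.pos]

lemma two_mul_le (h : CloseSeparatedPairs 𝔄 ak ε F F' ω ω' η) (hm : 0 < m) :
    2 * ε ≤ (1 + m * ak) * ε := by
  have hm1 : (1 : ℝ) ≤ m := by exact_mod_cast hm
  have hmak : 1 ≤ (m : ℝ) * ak := one_le_mul_of_one_le_of_one_le hm1 h.alph.one_le_ak
  nlinarith [h.pos]

lemma sqrt_mul_lt (h : CloseSeparatedPairs 𝔄 ak ε F F' ω ω' η) (hm : 0 < m) {c : Fin m → ℝ}
    (hc : inAlph 𝔄 c) : √(1 + ∑ u, c u ^ 2) * ε < (1 + m * ak) * ε :=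
  mul_lt_mul_of_pos_right (h.alph.sqrt_one_add_sum_sq_lt hm hc) h.pos

lemma vnorm_sub_le_of_eq_unitRow (h : CloseSeparatedPairs 𝔄 ak ε F F' ω ω' η) {r : Fin n}
    {s : Fin m} (hl : F r = unitRow s) (hr : F' r = unitRow s) : vnorm (ω s - ω' s) ≤ η r := by
  simpa [hl, mix_unitRow] using h.residual_le_of_right hr

lemma rowNorm_le_of_ne_zero (h : CloseSeparatedPairs 𝔄 ak ε F F' ω ω' η) {r : Fin n}
    {s u : Fin m} (hr : F' r = unitRow s) (hu : F r u ≠ 0) :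
    rowNorm ω u ≤ rowNorm ω' s + η r :=
  calc rowNorm ω u ≤ vnorm (mix (F r) ω) :=
        rowNorm_le_vnorm_mix h.alph (h.inAlph_left r) h.nonneg_left hu
    _ ≤ vnorm (ω' s) + vnorm (mix (F r) ω - ω' s) := vnorm_le_add_vnorm_sub _ _
    _ ≤ rowNorm ω' s + η r := add_le_add le_rfl (h.residual_le_of_right hr)

/-- A representation of `ω' s` through the rows of `ω` must use some row `u ≥ s`: otherwise,
once the rows below `s` are matched, it transfers to a representation through `ω'` itself,
which the separation of `ω'` forbids. -/
lemma exists_le_ne_zero (h : CloseSeparatedPairs 𝔄 ak ε F F' ω ω' η)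
    (hj' : ∀ i, F' (j' i) = unitRow i) (s : Fin m) (hprefix : ∀ u < s, F (j' u) = unitRow u) :
    ∃ u, s ≤ u ∧ F (j' s) u ≠ 0 := by
  by_contra! hzero
  set c := F (j' s) with hc
  have hcs : c s = 0 := hzero s le_rfl
  have hinj : Function.Injective j' := fun a b hab =>
    unitRow_injective (by rw [← hj' a, ← hj' b, hab])
  have hclose : ∀ u, c u * vnorm (ω u - ω' u) ≤ c u * η (j' u) := by
    intro u
    rcases lt_or_ge u s with hu | hu
    · exact mul_le_mul_of_nonneg_left (h.vnorm_sub_le_of_eq_unitRow (hprefix u hu) (hj' u))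
        (h.alph.nonneg (h.inAlph_left _ u))
    · simp [hzero u hu]
  have hne : unitRow s ≠ c := fun he => by simp [← he, unitRow] at hcs
  have hlower : (1 + m * ak) * ε ≤ vnorm (ω' s - mix c ω') := by
    simpa [mix_unitRow] using
      h.sep_right _ _ (h.alph.unitRow_inAlph s) (h.inAlph_left (j' s)) hne
  have hupper : vnorm (ω' s - mix c ω') ≤ ∑ u, (unitRow s + c) u * η (j' u) :=
    calc vnorm (ω' s - mix c ω')
        ≤ vnorm (ω' s - mix c ω) + vnorm (mix c ω - mix c ω') := vnorm_sub_le_add _ _ _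
      _ ≤ η (j' s) + ∑ u, c u * η (j' u) := by
          gcongr
          · rw [vnorm_sub_comm]
            exact h.residual_le_of_right (hj' s)
          · exact (vnorm_mix_sub_mix_le (fun u => h.alph.nonneg (h.inAlph_left _ u)) ω ω').trans
              (Finset.sum_le_sum fun u _ => hclose u)
      _ = ∑ u, (unitRow s + c) u * η (j' u) := by
          simp [add_mul, Finset.sum_add_distrib, unitRow]
  have hsq : ∑ u, (unitRow s + c) u ^ 2 = 1 + ∑ u, c u ^ 2 := by
    have hpt : ∀ u, (unitRow s + c) u ^ 2 = unitRow s u + c u ^ 2 := by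
      intro u
      by_cases hu : u = s
      · subst hu
        simp [unitRow, hcs]
      · simp [unitRow, hu]
    rw [Finset.sum_congr rfl fun u _ => hpt u, Finset.sum_add_distrib]
    simp [unitRow]
  have hcs_bound := h.sum_mul_le hinj (unitRow s + c)
  rw [hsq] at hcs_bound
  linarith [h.sqrt_mul_lt s.pos (h.inAlph_left (j' s))]

lemma rowNorm_le_rowNorm_add (h : CloseSeparatedPairs 𝔄 ak ε F F' ω ω' η)
    (hj' : ∀ i, F' (j' i) = unitRow i) (s : Fin m) (hprefix : ∀ u < s, F (j' u) = unitRow u) :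
    rowNorm ω s ≤ rowNorm ω' s + η (j' s) := by
  obtain ⟨u, hsu, hu⟩ := h.exists_le_ne_zero hj' s hprefix
  exact (h.gap_left.monotone (by linarith [h.pos]) hsu).trans
    (h.rowNorm_le_of_ne_zero (hj' s) hu)

lemma diag_ne_zero (h : CloseSeparatedPairs 𝔄 ak ε F F' ω ω' η)
    (hj' : ∀ i, F' (j' i) = unitRow i) (s : Fin m) (hprefix : ∀ u < s, F (j' u) = unitRow u)
    {r : Fin n} (hb : rowNorm ω' s ≤ rowNorm ω s + η r) (hpair : η r + η (j' s) < 2 * ε) :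
    F (j' s) s ≠ 0 := by
  obtain ⟨u, hsu, hu⟩ := h.exists_le_ne_zero hj' s hprefix
  rcases hsu.eq_or_lt with rfl | hlt
  · exact hu
  · exfalso
    linarith [h.gap_left s u hlt, h.rowNorm_le_of_ne_zero (hj' s) hu]

/-- Both representations use row `s` (the matched prefix and the row-norm gaps exclude the
others), and squeezing `ω s` and `ω' s` against each other brings `ω s` within
`η (j s) + η (j' s) < 2ε` of the mixture `F (j' s) ω`. -/
lemma eq_unitRow_of_prefix (h : CloseSeparatedPairs 𝔄 ak ε F F' ω ω' η)
    (hj : ∀ i, F (j i) = unitRow i) (hj' : ∀ i, F' (j' i) = unitRow i) (s : Fin m)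
    (hprefix : ∀ u < s, F (j' u) = unitRow u ∧ F' (j u) = unitRow u) :
    F (j' s) = unitRow s := by
  by_cases hjs : j s = j' s
  · rw [← hjs]
    exact hj s
  have hpair := h.add_lt_two_mul hjs
  have ha := h.rowNorm_le_rowNorm_add hj' s fun u hu => (hprefix u hu).1
  have hb := h.symm.rowNorm_le_rowNorm_add hj s fun u hu => (hprefix u hu).2
  have hf := h.diag_ne_zero hj' s (fun u hu => (hprefix u hu).1) hb hpair
  have he := h.symm.diag_ne_zero hj s (fun u hu => (hprefix u hu).2) ha (by linarith)
  by_contra hne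
  have hsep := h.sep_left _ _ (h.inAlph_left (j' s)) (h.alph.unitRow_inAlph s) hne
  rw [mix_unitRow] at hsep
  have hsand : vnorm (mix (F (j' s)) ω - ω s) ≤ η (j s) + η (j' s) :=
    (vnorm_sub_le_of_le (le_mix_of_ne_zero h.alph (h.inAlph_left _) h.nonneg_left hf)
      (le_mix_of_ne_zero h.alph (h.inAlph_right _) h.nonneg_right he)).trans
      (add_le_add (h.symm.residual_le_of_right (hj s)) (h.residual_le_of_right (hj' s)))
  linarith [h.two_mul_le s.pos]

lemma forall_eq_unitRow (h : CloseSeparatedPairs 𝔄 ak ε F F' ω ω' η)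
    (hj : ∀ i, F (j i) = unitRow i) (hj' : ∀ i, F' (j' i) = unitRow i) (s : Fin m) :
    F (j' s) = unitRow s ∧ F' (j s) = unitRow s := by
  induction s using WellFoundedLT.induction with
  | _ s ih =>
    exact ⟨h.eq_unitRow_of_prefix hj hj' s ih,
      h.symm.eq_unitRow_of_prefix hj' hj s fun u hu => (ih u hu).symm⟩

lemma vnorm_sub_le (h : CloseSeparatedPairs 𝔄 ak ε F F' ω ω' η)
    (hj : ∀ i, F (j i) = unitRow i) (hj' : ∀ i, F' (j' i) = unitRow i) (s : Fin m) :
    vnorm (ω s - ω' s) ≤ η (j s) :=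
  h.vnorm_sub_le_of_eq_unitRow (hj s) (h.forall_eq_unitRow hj hj' s).2

/-- Rows of `F` that are unit rows are matched; any other row `r` is compared with `F' r`
through the error `η r` plus the errors on the matched rows, which Cauchy–Schwarz keeps
below the separation. -/
lemma eq (h : CloseSeparatedPairs 𝔄 ak ε F F' ω ω' η)
    (hj : ∀ i, F (j i) = unitRow i) (hj' : ∀ i, F' (j' i) = unitRow i) : F = F' := by
  funext r
  by_contra hne
  obtain ⟨u₀, -⟩ := Function.ne_iff.mp hne
  by_cases hr : ∃ u, j u = r
  · obtain ⟨u, rfl⟩ := hr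
    exact hne ((hj u).trans (h.forall_eq_unitRow hj hj' u).2.symm)
  simp only [not_exists] at hr
  have hinj : Function.Injective fun o : Option (Fin m) => o.elim r j := by
    rintro (_ | a) (_ | b) hab
    · rfl
    · exact absurd hab.symm (hr b)
    · exact absurd hab (hr a)
    · exact congrArg some (unitRow_injective (by
        simp only [Option.elim] at hab
        rw [← hj a, ← hj b, hab]))
  have hupper : vnorm (mix (F r) ω - mix (F' r) ω)
      ≤ ∑ o : Option (Fin m), o.elim 1 (F' r) * η (o.elim r j) :=
    calc vnorm (mix (F r) ω - mix (F' r) ω)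
        ≤ vnorm (mix (F r) ω - mix (F' r) ω') + vnorm (mix (F' r) ω' - mix (F' r) ω) :=
          vnorm_sub_le_add _ _ _
      _ ≤ η r + ∑ u, F' r u * η (j u) := by
          gcongr
          · exact h.residual_le r
          · refine (vnorm_mix_sub_mix_le (fun u => h.alph.nonneg (h.inAlph_right r u)) ω' ω).trans
              (Finset.sum_le_sum fun u _ => ?_)
            gcongr
            · exact h.alph.nonneg (h.inAlph_right r u)
            · rw [vnorm_sub_comm]
              exact h.vnorm_sub_le hj hj' u
      _ = _ := by simp [Fintype.sum_option]
  have hcs_bound := h.sum_mul_le hinj fun o => o.elim 1 (F' r)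
  simp only [Fintype.sum_option, Option.elim, one_pow] at hcs_bound hupper
  linarith [h.sep_left _ _ (h.inAlph_left r) (h.inAlph_right r) hne,
    h.sqrt_mul_lt u₀.pos (h.inAlph_right r)]

end CloseSeparatedPairs

lemma CloseSeparatedPairs.of_frob_le {n m M : ℕ} (hM : 0 < M) {𝔄 : Finset ℝ} {ak δ : ℝ}
    (hA : AlphOK 𝔄 ak) (hδ : 0 < δ) {F F' : Fin n → Fin m → ℝ} (hF : Separable 𝔄 F)
    (hF' : Separable 𝔄 F') {ω ω' : Fin m → Fin M → ℝ} (hΩ : Omega ω) (hΩ' : Omega ω')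
    (hasb : δ ≤ ASB 𝔄 ω) (hasb' : δ ≤ ASB 𝔄 ω') (hwsb : WSBge ak δ ω)
    (hwsb' : WSBge ak δ ω') (hsmall : frob F F' ω ω' ≤ δ * √M / (1 + m * ak)) :
    CloseSeparatedPairs 𝔄 ak (δ * √M / (1 + m * ak)) F F' ω ω'
      fun r => vnorm (mix (F r) ω - mix (F' r) ω') := by
  have hak : 0 ≤ ak := zero_le_one.trans hA.one_le_ak
  have hden : (1 + m * ak : ℝ) ≠ 0 := by positivity
  have hε : 0 < δ * √M / (1 + m * ak) := by
    have := Real.sqrt_pos.mpr (show (0 : ℝ) < M by exact_mod_cast hM)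
    positivity
  have hsep : (1 + m * ak) * (δ * √M / (1 + m * ak)) = δ * √M := mul_div_cancel₀ _ hden
  exact
    { alph := hA
      inAlph_left := hF.1
      inAlph_right := hF'.1
      nonneg_left := hΩ.1
      nonneg_right := hΩ'.1
      gap_left := rowNormGap_of_WSBge hM hak hwsb hΩ.2.2.2
      gap_right := rowNormGap_of_WSBge hM hak hwsb' hΩ'.2.2.2
      sep_left := by rw [hsep]; exact isSeparated_of_le_ASB hM hasb
      sep_right := by rw [hsep]; exact isSeparated_of_le_ASB hM hasb'
      residual_le := fun _ => le_rfl
      sum_sq_le := by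
        rw [sum_vnorm_sq_eq_frob_sq]
        exact pow_le_pow_left₀ (Real.sqrt_nonneg _) hsmall 2
      pos := hε }

end MABS

theorem stmt13_general {n m M : ℕ} (hM : 0 < M)
    (𝔄 : Finset ℝ) (ak δ : ℝ) (hA : MABS.AlphOK 𝔄 ak) (hδ : 0 < δ)
    (F F' : Fin n → Fin m → ℝ) (hF : MABS.Separable 𝔄 F) (hF' : MABS.Separable 𝔄 F')
    (ω ω' : Fin m → Fin M → ℝ) (hΩ : MABS.Omega ω) (hΩ' : MABS.Omega ω')
    (hasb : δ ≤ MABS.ASB 𝔄 ω) (hasb' : δ ≤ MABS.ASB 𝔄 ω')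
    (hwsb : MABS.WSBge ak δ ω) (hwsb' : MABS.WSBge ak δ ω')
    (hsmall : MABS.frob F F' ω ω' ≤ δ * Real.sqrt (M : ℝ) / (1 + (m : ℝ) * ak)) :
    MABS.dmet F F' ω ω' ≤ MABS.frob F F' ω ω' := by
  choose j hj using hF.2
  choose j' hj' using hF'.2
  have h := MABS.CloseSeparatedPairs.of_frob_le hM hA hδ hF hF' hΩ hΩ' hasb hasb' hwsb hwsb'
    hsmall
  rw [MABS.dmet, if_pos (h.eq hj hj'), zero_add]
  refine Real.sSup_le ?_ (Real.sqrt_nonneg _)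
  rintro _ ⟨s, rfl⟩
  exact (h.vnorm_sub_le hj hj' s).trans (MABS.vnorm_le_frob F F' ω ω' (j s))

/-- **local metric equivalence, upper part.** If `(F, ω)` and `(F', ω')`
are `δ`-separable MABS parameter pairs with Frobenius distance
`‖Fω - F'ω'‖ ≤ δ√M/(1 + m·a_k)`, then `d((F,ω),(F',ω')) ≤ ‖Fω - F'ω'‖`. -/
theorem stmt13 {n m M : ℕ} (hn : 0 < n) (hm : 0 < m) (hM : 0 < M)
    (𝔄 : Finset ℝ) (ak δ : ℝ) (hA : MABS.AlphOK 𝔄 ak) (hδ : 0 < δ)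
    (F F' : Fin n → Fin m → ℝ) (hF : MABS.Separable 𝔄 F) (hF' : MABS.Separable 𝔄 F')
    (ω ω' : Fin m → Fin M → ℝ) (hΩ : MABS.Omega ω) (hΩ' : MABS.Omega ω')
    (hasb : δ ≤ MABS.ASB 𝔄 ω) (hasb' : δ ≤ MABS.ASB 𝔄 ω')
    (hwsb : MABS.WSBge ak δ ω) (hwsb' : MABS.WSBge ak δ ω')
    (hsmall : MABS.frob F F' ω ω' ≤ δ * Real.sqrt (M : ℝ) / (1 + (m : ℝ) * ak)) :
    MABS.dmet F F' ω ω' ≤ MABS.frob F F' ω ω' :=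
  stmt13_general hM 𝔄 ak δ hA hδ F F' hF hF' ω ω' hΩ hΩ' hasb hasb' hwsb hwsb' hsmall
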